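/- Markov chain arithmetic–logarithmic–geometric mean inequality: Let L ∈ ℒ. Then for all x ≠ y: P_1(x,y) ≥ P_{1/3}(x,y) ≥ C_{1,ln}(x,y) ≥ P_0(x,y), and all these inequalities hold with equality for every x ≠ y if and only if L ∈ ℒ(π). Consequently, λ₂(P_0, π) ≤ λ₂(C_{1,ln}, π) ≤ λ₂(P_{1/3}, π) ≤ λ₂(P_1, π). -/

import Mathlib

open Finset

noncomputable section

variable {X : Type*} [Fintype X] [DecidableEq X]

/-- Build a matrix with prescribed off-diagonal entries and diagonal entries
chosen so that every row sums to zero. -/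
def rowZero (F : X → X → ℝ) : X → X → ℝ :=
  fun x y => if x = y then -(∑ z ∈ Finset.univ.erase x, F x z) else F x y

/-- `L` is a Markov infinitesimal generator: nonnegative off-diagonal entries
and zero row sums. -/
def IsGen (L : X → X → ℝ) : Prop :=
  (∀ x y, x ≠ y → 0 ≤ L x y) ∧ (∀ x, ∑ y, L x y = 0)

/-- `L` is a `π`-reversible Markov generator, i.e. `L ∈ ℒ(π)`. -/
def IsRev (π : X → ℝ) (L : X → X → ℝ) : Prop :=
  IsGen L ∧ ∀ x y, π x * L x y = π y * L y x

/-- `π` is a probability distribution with full support. -/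
def IsProb (π : X → ℝ) : Prop := (∀ x, 0 < π x) ∧ ∑ x, π x = 1

/-- The `π`-dual `L_π` of `L`: off-diagonal entries `π(y)L(y,x)/π(x)`,
diagonal entries make row sums zero. -/
def dual (π : X → ℝ) (L : X → X → ℝ) : X → X → ℝ :=
  rowZero (fun x y => π y * L y x / π x)

/-- The `f`-divergence between generators: `Df f π M L = D_f(M‖L)`.
(The convention `0·f(a/0) = 0` holds automatically since `a/0 = 0` and
the factor `L x y = 0` kills the term.) -/
def Df (f : ℝ → ℝ) (π : X → ℝ) (M L : X → X → ℝ) : ℝ :=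
  ∑ x, π x * ∑ y ∈ Finset.univ.erase x, L x y * f (M x y / L x y)

/-- The power mean reversiblization `P_p(L)` (`p ≠ 0`): off-diagonal entries
`((L(x,y)^p + L_π(x,y)^p)/2)^{1/p}`, diagonal entries make row sums zero. -/
def pmean (p : ℝ) (π : X → ℝ) (L : X → X → ℝ) : X → X → ℝ :=
  rowZero (fun x y => ((L x y ^ p + dual π L x y ^ p) / 2) ^ (1 / p))

/-- The geometric mean reversiblization `P₀(L)`:
off-diagonal entries `(L(x,y)·L_π(x,y))^{1/2}`. -/
def geoRev (π : X → ℝ) (L : X → X → ℝ) : X → X → ℝ :=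
  rowZero (fun x y => Real.sqrt (L x y * dual π L x y))

/-- The logarithmic mean reversiblization `C_{1,ln}`: off-diagonal entries
`(L(x,y) − L_π(x,y))/(ln L(x,y) − ln L_π(x,y))` when both entries are positive
and distinct, `L(x,y)` when they are equal, `0` when exactly one vanishes. -/
def C1ln (π : X → ℝ) (L : X → X → ℝ) : X → X → ℝ :=
  rowZero (fun x y =>
    if L x y = dual π L x y then L x y
    else if L x y = 0 ∨ dual π L x y = 0 then 0
    else (L x y - dual π L x y) / (Real.log (L x y) - Real.log (dual π L x y)))

/-- The Dirichlet form `⟨−Mf, f⟩_π = ∑_x π(x)(−(Mf)(x))f(x)`. -/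
def quadForm (π : X → ℝ) (M : X → X → ℝ) (f : X → ℝ) : ℝ :=
  ∑ x, π x * (-(∑ y, M x y * f y)) * f x

/-- The spectral gap `λ₂(M,π) = inf{⟨−Mf,f⟩_π : π(f) = 0, π(f²) = 1}`. -/
def gap (π : X → ℝ) (M : X → X → ℝ) : ℝ :=
  sInf {r : ℝ | ∃ f : X → ℝ,
    (∑ x, π x * f x = 0) ∧ (∑ x, π x * f x ^ 2 = 1) ∧ r = quadForm π M f}


set_option linter.unusedSectionVars false

section Scalar

/-- logarithmic mean -/
noncomputable def lmean (a b : ℝ) : ℝ :=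
  if a = b then a
  else if a = 0 ∨ b = 0 then 0
  else (a - b) / (Real.log a - Real.log b)

lemma lmean_ineq_of_lt {a b : ℝ} (hb : 0 < b) (hab : b < a) :
    Real.sqrt (a*b) * (Real.log a - Real.log b) ≤ a - b := by
  have ha : 0 < a := hb.trans hab
  set sa := Real.sqrt a with hsa
  set sb := Real.sqrt b with hsb
  have hsa0 : 0 < sa := Real.sqrt_pos.mpr ha
  have hsb0 : 0 < sb := Real.sqrt_pos.mpr hb
  have hsa2 : sa * sa = a := Real.mul_self_sqrt ha.le
  have hsb2 : sb * sb = b := Real.mul_self_sqrt hb.le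
  have hla : Real.log a = 2 * Real.log sa := by
    rw [← hsa2, Real.log_mul hsa0.ne' hsa0.ne']; ring
  have hlb : Real.log b = 2 * Real.log sb := by
    rw [← hsb2, Real.log_mul hsb0.ne' hsb0.ne']; ring
  set s := (Real.log a - Real.log b)/2 with hs
  have hspos : 0 < s := by
    have : Real.log b < Real.log a := Real.log_lt_log hb hab
    simp [hs]; linarith
  have hexp : Real.exp s = sa / sb := by
    rw [hs, hla, hlb]
    have : (2 * Real.log sa - 2 * Real.log sb) / 2 = Real.log sa - Real.log sb := by ring
    rw [this, Real.exp_sub, Real.exp_log hsa0, Real.exp_log hsb0]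
  have hexp' : Real.exp (-s) = sb / sa := by
    rw [Real.exp_neg, hexp]; field_simp
  have hsinh : Real.sinh s = (a - b) / (2 * (sa * sb)) := by
    rw [Real.sinh_eq, hexp, hexp']
    field_simp
    linear_combination hsa2 - hsb2
  have hle : s ≤ Real.sinh s := (Real.self_lt_sinh_iff.mpr hspos).le
  rw [hsinh, hs] at hle
  have hprod : 0 < sa * sb := mul_pos hsa0 hsb0
  have hsqrt : Real.sqrt (a*b) = sa * sb := Real.sqrt_mul ha.le b
  rw [hsqrt]
  rw [div_le_div_iff₀ (by norm_num) (by positivity)] at hle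
  nlinarith [hle]

lemma gm_le_lmean {a b : ℝ} (ha : 0 ≤ a) (hb : 0 ≤ b) :
    Real.sqrt (a*b) ≤ lmean a b := by
  unfold lmean
  rcases eq_or_ne a b with rfl | hne
  · simp [Real.sqrt_mul_self ha]
  · rw [if_neg hne]
    rcases eq_or_ne a 0 with rfl | ha0
    · simp
    rcases eq_or_ne b 0 with rfl | hb0
    · simp
    rw [if_neg (by tauto)]
    have ha' : 0 < a := lt_of_le_of_ne ha (Ne.symm ha0)
    have hb' : 0 < b := lt_of_le_of_ne hb (Ne.symm hb0)
    rcases lt_or_gt_of_ne hne with h | h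
    · -- a < b
      have key := lmean_ineq_of_lt ha' h
      have hlog : Real.log a - Real.log b < 0 := by
        have := Real.log_lt_log ha' h; linarith
      rw [mul_comm a b] at *
      rw [le_div_iff_of_neg hlog]
      nlinarith [key]
    · have key := lmean_ineq_of_lt hb' h
      have hlog : 0 < Real.log a - Real.log b := by
        have := Real.log_lt_log hb' h; linarith
      rw [le_div_iff₀ hlog]
      linarith [key]

noncomputable def Fln : ℝ → ℝ := fun t => Real.log t - (8*t^3 - 8)/(3*(t+1)^3)

lemma Fln_hasDeriv {t : ℝ} (ht : 0 < t) :
    HasDerivAt Fln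
      (1/t - ((24*t^2)*(3*(t+1)^3) - (8*t^3-8)*(9*(t+1)^2))/((3*(t+1)^3)^2)) t := by
  have hden : (3:ℝ)*(t+1)^3 ≠ 0 := by positivity
  have h1 : HasDerivAt (fun x : ℝ => 8*x^3 - 8) (24*t^2) t := by
    have := ((hasDerivAt_pow 3 t).const_mul (8:ℝ)).sub_const (8:ℝ)
    exact this.congr_deriv (by norm_num; ring)
  have h2 : HasDerivAt (fun x : ℝ => 3*(x+1)^3) (9*(t+1)^2) t := by
    have := ((((hasDerivAt_id t).add_const 1).pow 3).const_mul (3:ℝ))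
    exact this.congr_deriv (by norm_num; ring)
  have h3 := h1.div h2 hden
  have h4 := (Real.hasDerivAt_log ht.ne').sub h3
  exact h4.congr_deriv (by rw [one_div])

lemma Fln_nonneg {t : ℝ} (ht : 1 ≤ t) : 0 ≤ Fln t := by
  have h0 : Fln 1 = 0 := by norm_num [Fln]
  have hmono : MonotoneOn Fln (Set.Ici 1) := by
    apply monotoneOn_of_deriv_nonneg (convex_Ici 1)
    · intro x hx
      exact (Fln_hasDeriv (lt_of_lt_of_le one_pos hx)).continuousAt.continuousWithinAt
    · intro x hx
      rw [interior_Ici] at hx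
      exact (Fln_hasDeriv (lt_trans one_pos hx)).differentiableAt.differentiableWithinAt
    · intro x hx
      rw [interior_Ici] at hx
      have hx0 : (0:ℝ) < x := lt_trans one_pos hx
      rw [(Fln_hasDeriv hx0).deriv]
      rw [sub_nonneg, div_le_div_iff₀ (by positivity) hx0]
      nlinarith [pow_nonneg (sub_nonneg.mpr (hx.le : (1:ℝ) ≤ x)) 4, sq_nonneg (x+1), sq_nonneg (x-1), mul_pos hx0 (pow_pos (by linarith : (0:ℝ) < x+1) 4)]
  have := hmono (Set.self_mem_Ici) (Set.mem_Ici.mpr ht) ht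
  linarith [h0 ▸ this]

lemma lmean_comm (a b : ℝ) : lmean a b = lmean b a := by
  unfold lmean
  rcases eq_or_ne a b with rfl | hne
  · simp
  · rw [if_neg hne, if_neg (Ne.symm hne)]
    split_ifs with h1 h2 h2
    · rfl
    · exact absurd (h1.symm.imp id id) h2
    · exact absurd (h2.symm.imp id id) h1
    · rw [← neg_sub b a, ← neg_sub (Real.log b), neg_div_neg_eq]

lemma lmean_le_p13_of_lt {a b : ℝ} (hb : 0 < b) (hab : b < a) :
    lmean a b ≤ ((a ^ ((1:ℝ)/3) + b ^ ((1:ℝ)/3)) / 2) ^ (3:ℝ) := by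
  have ha : 0 < a := hb.trans hab
  set u := a ^ ((1:ℝ)/3) with hu
  set v := b ^ ((1:ℝ)/3) with hv
  have hu0 : 0 < u := Real.rpow_pos_of_pos ha _
  have hv0 : 0 < v := Real.rpow_pos_of_pos hb _
  have hu3 : u^(3:ℕ) = a := by
    rw [hu, ← Real.rpow_natCast (a ^ ((1:ℝ)/3)) 3, ← Real.rpow_mul ha.le]
    norm_num
  have hv3 : v^(3:ℕ) = b := by
    rw [hv, ← Real.rpow_natCast (b ^ ((1:ℝ)/3)) 3, ← Real.rpow_mul hb.le]
    norm_num
  have huv : v < u := Real.rpow_lt_rpow hb.le hab (by norm_num)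
  have ht1 : 1 < u / v := (one_lt_div hv0).mpr huv
  have key := Fln_nonneg ht1.le
  unfold Fln at key
  have hlogu : Real.log u = Real.log a / 3 := by
    rw [hu, Real.log_rpow ha]; ring
  have hlogv : Real.log v = Real.log b / 3 := by
    rw [hv, Real.log_rpow hb]; ring
  have hlogt : Real.log (u/v) = (Real.log a - Real.log b)/3 := by
    rw [Real.log_div hu0.ne' hv0.ne', hlogu, hlogv]; ring
  set Lg := Real.log a - Real.log b with hLg
  have hLg0 : 0 < Lg := by
    have := Real.log_lt_log hb hab; simp [hLg]; linarith
  rw [hlogt] at key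
  have hden : (0:ℝ) < 3*(u/v+1)^3 := by positivity
  have key2 : 8*(u/v)^3 - 8 ≤ (u/v+1)^3 * Lg := by
    rw [sub_nonneg, div_le_iff₀ hden] at key
    nlinarith [key]
  have ht3 : (u/v)^(3:ℕ) = a/b := by rw [div_pow, hu3, hv3]
  have htp3 : (u/v+1)^(3:ℕ) = (u+v)^3/b := by
    rw [← hv3]; field_simp
  rw [ht3, htp3] at key2
  have key3 : 8*a - 8*b ≤ (u+v)^3 * Lg := by
    have h := mul_le_mul_of_nonneg_right key2 hb.le
    calc 8*a - 8*b = (8*(a/b)-8)*b := by field_simp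
    _ ≤ ((u+v)^3/b*Lg)*b := h
    _ = (u+v)^3 * Lg := by field_simp
  have hrp : ((u + v) / 2) ^ (3:ℝ) = ((u+v)/2)^(3:ℕ) := by
    rw [← Real.rpow_natCast ((u+v)/2) 3]; norm_num
  rw [lmean, if_neg (by linarith), if_neg (by push_neg; constructor <;> positivity), hrp]
  rw [div_le_iff₀ hLg0, div_pow]
  nlinarith [key3]

lemma lmean_le_p13 {a b : ℝ} (ha : 0 ≤ a) (hb : 0 ≤ b) :
    lmean a b ≤ ((a ^ ((1:ℝ)/3) + b ^ ((1:ℝ)/3)) / 2) ^ (3:ℝ) := by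
  rcases eq_or_ne a b with rfl | hne
  · rw [lmean, if_pos rfl]
    have : ((a ^ ((1:ℝ)/3) + a ^ ((1:ℝ)/3)) / 2) = a ^ ((1:ℝ)/3) := by ring
    rw [this, ← Real.rpow_mul ha]
    norm_num
  rcases eq_or_ne a 0 with rfl | ha0
  · rw [lmean, if_neg hne, if_pos (Or.inl rfl)]; positivity
  rcases eq_or_ne b 0 with rfl | hb0
  · rw [lmean, if_neg hne, if_pos (Or.inr rfl)]; positivity
  have ha' : 0 < a := lt_of_le_of_ne ha (Ne.symm ha0)
  have hb' : 0 < b := lt_of_le_of_ne hb (Ne.symm hb0)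
  rcases lt_or_gt_of_ne hne with h | h
  · rw [lmean_comm]
    have := lmean_le_p13_of_lt ha' h
    rw [add_comm (b ^ ((1:ℝ)/3))] at this
    exact this
  · exact lmean_le_p13_of_lt hb' h

lemma p13_le_p1 {a b : ℝ} (ha : 0 ≤ a) (hb : 0 ≤ b) :
    ((a ^ ((1:ℝ)/3) + b ^ ((1:ℝ)/3)) / 2) ^ (3:ℝ) ≤ (a + b) / 2 := by
  set u := a ^ ((1:ℝ)/3) with hu
  set v := b ^ ((1:ℝ)/3) with hv
  have hu0 : 0 ≤ u := Real.rpow_nonneg ha _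
  have hv0 : 0 ≤ v := Real.rpow_nonneg hb _
  have hu3 : u^(3:ℕ) = a := by
    rw [hu, ← Real.rpow_natCast (a ^ ((1:ℝ)/3)) 3, ← Real.rpow_mul ha]; norm_num
  have hv3 : v^(3:ℕ) = b := by
    rw [hv, ← Real.rpow_natCast (b ^ ((1:ℝ)/3)) 3, ← Real.rpow_mul hb]; norm_num
  have hrp : ((u + v) / 2) ^ (3:ℝ) = ((u+v)/2)^(3:ℕ) := by
    rw [← Real.rpow_natCast ((u+v)/2) 3]; norm_num
  rw [hrp, ← hu3, ← hv3]
  nlinarith [mul_nonneg (add_nonneg hu0 hv0) (sq_nonneg (u - v))]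

lemma gm_lt_am {a b : ℝ} (ha : 0 ≤ a) (hb : 0 ≤ b) (hne : a ≠ b) :
    Real.sqrt (a*b) < (a + b) / 2 := by
  have hsa := Real.sq_sqrt ha
  have hsb := Real.sq_sqrt hb
  have h : Real.sqrt a ≠ Real.sqrt b := by
    intro h; apply hne; rw [← hsa, ← hsb, h]
  have h3 : Real.sqrt a - Real.sqrt b ≠ 0 := sub_ne_zero.mpr h
  have h2 : 0 < (Real.sqrt a - Real.sqrt b)^2 :=
    lt_of_le_of_ne (sq_nonneg _) (Ne.symm (pow_ne_zero 2 h3))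
  rw [Real.sqrt_mul ha]
  nlinarith [h2, hsa, hsb]

end Scalar

lemma rowZero_off (F : X → X → ℝ) {x y : X} (h : x ≠ y) : rowZero F x y = F x y :=
  if_neg h

lemma rowZero_sum (F : X → X → ℝ) (x : X) : ∑ y, rowZero F x y = 0 := by
  rw [← Finset.sum_erase_add Finset.univ _ (Finset.mem_univ x)]
  have h1 : ∑ y ∈ Finset.univ.erase x, rowZero F x y = ∑ y ∈ Finset.univ.erase x, F x y :=
    Finset.sum_congr rfl fun y hy =>
      if_neg (fun h => (Finset.ne_of_mem_erase hy) h.symm)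
  have h2 : rowZero F x x = -(∑ z ∈ Finset.univ.erase x, F x z) := if_pos rfl
  rw [h1, h2, add_neg_cancel]

lemma quadForm_eq (π : X → ℝ) (M : X → X → ℝ)
    (hsym : ∀ x y, π x * M x y = π y * M y x) (hrow : ∀ x, ∑ y, M x y = 0) (f : X → ℝ) :
    quadForm π M f = (1/2) * ∑ x, ∑ y, π x * M x y * (f x - f y)^2 := by
  have h1 : ∀ g : X → ℝ, ∑ x, ∑ y, π x * M x y * g x = 0 := by
    intro g
    apply Finset.sum_eq_zero
    intro x _
    have : ∑ y, π x * M x y * g x = (π x * g x) * ∑ y, M x y := by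
      rw [Finset.mul_sum]
      exact Finset.sum_congr rfl fun y _ => by ring
    rw [this, hrow, mul_zero]
  have h2 : ∑ x, ∑ y, π x * M x y * (f y)^2 = 0 := by
    calc ∑ x, ∑ y, π x * M x y * (f y)^2
        = ∑ x, ∑ y, π y * M y x * (f y)^2 := by
          exact Finset.sum_congr rfl fun x _ => Finset.sum_congr rfl fun y _ => by rw [hsym]
      _ = ∑ y, ∑ x, π y * M y x * (f y)^2 := Finset.sum_comm
      _ = 0 := h1 (fun z => f z ^ 2)
  have hq : quadForm π M f = -∑ x, ∑ y, π x * M x y * (f y * f x) := by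
    unfold quadForm
    have key : ∀ x, π x * (-(∑ y, M x y * f y)) * f x
        = -(∑ y, π x * M x y * (f y * f x)) := by
      intro x
      have : π x * (-(∑ y, M x y * f y)) * f x = -(π x * (∑ y, M x y * f y) * f x) := by ring
      rw [this]
      congr 1
      rw [Finset.mul_sum, Finset.sum_mul]
      exact Finset.sum_congr rfl fun y _ => by ring
    rw [Finset.sum_congr rfl fun x _ => key x, ← Finset.sum_neg_distrib]
  have hexp : ∀ x y, π x * M x y * (f x - f y)^2
      = π x * M x y * (f x)^2 - 2*(π x * M x y * (f y * f x)) + π x * M x y * (f y)^2 :=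
    fun x y => by ring
  have : ∑ x, ∑ y, π x * M x y * (f x - f y)^2
      = (∑ x, ∑ y, π x * M x y * (f x)^2)
        - 2*(∑ x, ∑ y, π x * M x y * (f y * f x))
        + (∑ x, ∑ y, π x * M x y * (f y)^2) := by
    simp_rw [hexp, Finset.sum_add_distrib, Finset.sum_sub_distrib, ← Finset.mul_sum]
  rw [this, h1 (fun z => f z ^ 2), h2, hq]
  ring

lemma quadForm_nonneg (π : X → ℝ) (M : X → X → ℝ) (hπ : ∀ x, 0 < π x)
    (hsym : ∀ x y, π x * M x y = π y * M y x) (hrow : ∀ x, ∑ y, M x y = 0)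
    (h0 : ∀ x y, x ≠ y → 0 ≤ M x y) (f : X → ℝ) : 0 ≤ quadForm π M f := by
  rw [quadForm_eq π M hsym hrow f]
  apply mul_nonneg (by norm_num)
  apply Finset.sum_nonneg; intro x _
  apply Finset.sum_nonneg; intro y _
  rcases eq_or_ne x y with rfl | hxy
  · simp
  · exact mul_nonneg (mul_nonneg (hπ x).le (h0 x y hxy)) (sq_nonneg _)

lemma quadForm_mono (π : X → ℝ) (M N : X → X → ℝ) (hπ : ∀ x, 0 < π x)
    (hMsym : ∀ x y, π x * M x y = π y * M y x) (hMrow : ∀ x, ∑ y, M x y = 0)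
    (hNsym : ∀ x y, π x * N x y = π y * N y x) (hNrow : ∀ x, ∑ y, N x y = 0)
    (hle : ∀ x y, x ≠ y → M x y ≤ N x y) (f : X → ℝ) :
    quadForm π M f ≤ quadForm π N f := by
  rw [quadForm_eq π M hMsym hMrow f, quadForm_eq π N hNsym hNrow f]
  apply mul_le_mul_of_nonneg_left _ (by norm_num : (0:ℝ) ≤ 1/2)
  apply Finset.sum_le_sum; intro x _
  apply Finset.sum_le_sum; intro y _
  rcases eq_or_ne x y with rfl | hxy
  · simp
  · exact mul_le_mul_of_nonneg_right
      (mul_le_mul_of_nonneg_left (hle x y hxy) (hπ x).le) (sq_nonneg _)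

lemma gap_witness (hcard : 1 < Fintype.card X) (π : X → ℝ) (hπ : IsProb π) :
    ∃ f : X → ℝ, (∑ x, π x * f x = 0) ∧ (∑ x, π x * f x ^ 2 = 1) := by
  obtain ⟨x0, x1, hne⟩ := Fintype.exists_pair_of_one_lt_card hcard
  set m := π x0 with hm
  have hm0 : 0 < m := hπ.1 x0
  have hm1 : m < 1 := by
    have hx1 : x1 ∈ Finset.univ.erase x0 := Finset.mem_erase.mpr ⟨Ne.symm hne, Finset.mem_univ x1⟩
    have h1 : π x1 ≤ ∑ z ∈ Finset.univ.erase x0, π z :=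
      Finset.single_le_sum (fun z _ => (hπ.1 z).le) hx1
    have h2 : ∑ z ∈ Finset.univ.erase x0, π z + π x0 = 1 := by
      rw [Finset.sum_erase_add Finset.univ _ (Finset.mem_univ x0)]; exact hπ.2
    have := hπ.1 x1
    linarith
  set c := Real.sqrt (m * (1 - m)) with hc
  have hc0 : 0 < c := Real.sqrt_pos.mpr (by nlinarith)
  have hc2 : c^2 = m * (1-m) := Real.sq_sqrt (by nlinarith)
  set g : X → ℝ := fun z => if z = x0 then 1 else 0 with hg
  refine ⟨fun z => (g z - m)/c, ?_, ?_⟩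
  · have : ∑ x, π x * ((g x - m)/c) = (∑ x, (π x * g x - π x * m)) / c := by
      rw [Finset.sum_div]
      exact Finset.sum_congr rfl fun x _ => by ring
    rw [this, Finset.sum_sub_distrib, ← Finset.sum_mul, hπ.2]
    have hsum : ∑ x, π x * g x = m := by
      simp [hg, mul_ite, Finset.sum_ite_eq', hm]
    rw [hsum]
    simp
  · have key : ∀ x, π x * ((g x - m)/c)^2 = (π x * g x - 2*m*(π x * g x) + π x * m^2) / c^2 := by
      intro x
      have hgg : g x * g x = g x := by
        rcases eq_or_ne x x0 with rfl | h
        · simp [hg]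
        · simp [hg, h]
      have hexp : (g x - m)^2 = g x - 2*m*(g x) + m^2 := by
        have : (g x - m)^2 = g x * g x - 2*m*(g x) + m^2 := by ring
        rw [this, hgg]
      rw [div_pow, hexp]
      ring
    simp_rw [key]
    rw [← Finset.sum_div, Finset.sum_add_distrib, Finset.sum_sub_distrib, ← Finset.mul_sum,
      ← Finset.sum_mul]
    have hsum : ∑ x, π x * g x = m := by
      simp [hg, mul_ite, Finset.sum_ite_eq', hm]
    rw [hsum, hπ.2, div_eq_one_iff_eq (pow_ne_zero 2 hc0.ne'), hc2]
    ring

lemma gap_mono (hcard : 1 < Fintype.card X) (π : X → ℝ) (hπ : IsProb π)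
    (M N : X → X → ℝ)
    (hMsym : ∀ x y, π x * M x y = π y * M y x) (hMrow : ∀ x, ∑ y, M x y = 0)
    (hM0 : ∀ x y, x ≠ y → 0 ≤ M x y)
    (hNsym : ∀ x y, π x * N x y = π y * N y x) (hNrow : ∀ x, ∑ y, N x y = 0)
    (hle : ∀ x y, x ≠ y → M x y ≤ N x y) :
    gap π M ≤ gap π N := by
  obtain ⟨f0, hf1, hf2⟩ := gap_witness hcard π hπ
  have hbdd : BddBelow {r : ℝ | ∃ f : X → ℝ,
      (∑ x, π x * f x = 0) ∧ (∑ x, π x * f x ^ 2 = 1) ∧ r = quadForm π M f} := by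
    refine ⟨0, fun r hr => ?_⟩
    obtain ⟨f, _, _, rfl⟩ := hr
    exact quadForm_nonneg π M hπ.1 hMsym hMrow hM0 f
  have hne : Set.Nonempty {r : ℝ | ∃ f : X → ℝ,
      (∑ x, π x * f x = 0) ∧ (∑ x, π x * f x ^ 2 = 1) ∧ r = quadForm π N f} :=
    ⟨quadForm π N f0, ⟨f0, hf1, hf2, rfl⟩⟩
  unfold gap
  apply le_csInf hne
  rintro r ⟨f, h1, h2, rfl⟩
  exact le_trans (csInf_le hbdd ⟨f, h1, h2, rfl⟩)
    (quadForm_mono π M N hπ.1 hMsym hMrow hNsym hNrow hle f)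


lemma dual_off (π : X → ℝ) (L : X → X → ℝ) {x y : X} (h : x ≠ y) :
    dual π L x y = π y * L y x / π x := rowZero_off _ h

lemma symm_mean (π : X → ℝ) (L : X → X → ℝ) (hπ : ∀ x, 0 < π x)
    (hL0 : ∀ x y, x ≠ y → 0 ≤ L x y) (m : ℝ → ℝ → ℝ)
    (hsymm : ∀ u v, m u v = m v u)
    (hhom : ∀ c u v, 0 < c → 0 ≤ u → 0 ≤ v → m (c*u) (c*v) = c * m u v)
    (x y : X) :
    π x * rowZero (fun x y => m (L x y) (dual π L x y)) x y
      = π y * rowZero (fun x y => m (L x y) (dual π L x y)) y x := by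
  rcases eq_or_ne x y with rfl | hxy
  · rfl
  · rw [rowZero_off _ hxy, rowZero_off _ hxy.symm, dual_off π L hxy, dual_off π L hxy.symm]
    have ha := hL0 x y hxy
    have hb := hL0 y x hxy.symm
    have e1 : π x * m (L x y) (π y * L y x / π x) = m (π x * L x y) (π y * L y x) := by
      rw [← hhom (π x) _ _ (hπ x) ha (div_nonneg (mul_nonneg (hπ y).le hb) (hπ x).le)]
      congr 1
      rw [mul_comm (π x), div_mul_cancel₀ _ (hπ x).ne']
    have e2 : π y * m (L y x) (π x * L x y / π y) = m (π y * L y x) (π x * L x y) := by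
      rw [← hhom (π y) _ _ (hπ y) hb (div_nonneg (mul_nonneg (hπ x).le ha) (hπ y).le)]
      congr 1
      rw [mul_comm (π y), div_mul_cancel₀ _ (hπ y).ne']
    rw [e1, e2, hsymm]

lemma sqrt_hom {c u v : ℝ} (hc : 0 < c) :
    Real.sqrt ((c*u)*(c*v)) = c * Real.sqrt (u*v) := by
  rw [show (c*u)*(c*v) = c^2*(u*v) from by ring, Real.sqrt_mul (sq_nonneg c),
    Real.sqrt_sq hc.le]

lemma pmean_hom {p c u v : ℝ} (hp : 0 < p) (hc : 0 < c) (hu : 0 ≤ u) (hv : 0 ≤ v) :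
    (((c*u) ^ p + (c*v) ^ p)/2) ^ (1/p) = c * ((u ^ p + v ^ p)/2) ^ (1/p) := by
  rw [Real.mul_rpow hc.le hu, Real.mul_rpow hc.le hv,
    show (c^p*u^p + c^p*v^p)/2 = c^p * ((u^p+v^p)/2) from by ring,
    Real.mul_rpow (Real.rpow_nonneg hc.le p)
      (div_nonneg (add_nonneg (Real.rpow_nonneg hu p) (Real.rpow_nonneg hv p)) (by norm_num)),
    ← Real.rpow_mul hc.le, mul_one_div_cancel hp.ne', Real.rpow_one]

lemma lmean_hom {c u v : ℝ} (hc : 0 < c) (hu : 0 ≤ u) (hv : 0 ≤ v) :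
    lmean (c*u) (c*v) = c * lmean u v := by
  unfold lmean
  by_cases h : u = v
  · subst h; simp
  · have hcu : c*u ≠ c*v := fun hh => h (mul_left_cancel₀ hc.ne' hh)
    rw [if_neg hcu, if_neg h]
    by_cases h0 : u = 0 ∨ v = 0
    · have h0' : c*u = 0 ∨ c*v = 0 :=
        h0.imp (fun h => by rw [h, mul_zero]) (fun h => by rw [h, mul_zero])
      rw [if_pos h0', if_pos h0, mul_zero]
    · push_neg at h0
      have hu' : 0 < u := lt_of_le_of_ne hu (Ne.symm h0.1)
      have hv' : 0 < v := lt_of_le_of_ne hv (Ne.symm h0.2)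
      rw [if_neg (by push_neg; exact ⟨(mul_pos hc hu').ne', (mul_pos hc hv').ne'⟩),
        if_neg (by push_neg; exact h0)]
      rw [Real.log_mul hc.ne' h0.1, Real.log_mul hc.ne' h0.2,
        show Real.log c + Real.log u - (Real.log c + Real.log v)
          = Real.log u - Real.log v from by ring,
        show c*u - c*v = c*(u-v) from by ring, mul_div_assoc]

lemma lmean_nonneg {a b : ℝ} (ha : 0 ≤ a) (hb : 0 ≤ b) : 0 ≤ lmean a b :=
  le_trans (Real.sqrt_nonneg _) (gm_le_lmean ha hb)

/-- **Markov chain arithmetic–logarithmic–geometric mean inequality**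
(Theorem 4.3): for `L ∈ ℒ` and all `x ≠ y`,
`P₁(x,y) ≥ P_{1/3}(x,y) ≥ C_{1,ln}(x,y) ≥ P₀(x,y)`, with equality everywhere
iff `L ∈ ℒ(π)`; consequently
`λ₂(P₀,π) ≤ λ₂(C_{1,ln},π) ≤ λ₂(P_{1/3},π) ≤ λ₂(P₁,π)`. -/
theorem am_lm_gm_markov (hcard : 1 < Fintype.card X)
    (π : X → ℝ) (hπ : IsProb π)
    (L : X → X → ℝ) (hL : IsGen L) :
    (∀ x y, x ≠ y →
      geoRev π L x y ≤ C1ln π L x y ∧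
      C1ln π L x y ≤ pmean (1 / 3) π L x y ∧
      pmean (1 / 3) π L x y ≤ pmean 1 π L x y) ∧
    ((∀ x y, x ≠ y →
        geoRev π L x y = C1ln π L x y ∧
        C1ln π L x y = pmean (1 / 3) π L x y ∧
        pmean (1 / 3) π L x y = pmean 1 π L x y) ↔ IsRev π L) ∧
    (gap π (geoRev π L) ≤ gap π (C1ln π L) ∧
      gap π (C1ln π L) ≤ gap π (pmean (1 / 3) π L) ∧
      gap π (pmean (1 / 3) π L) ≤ gap π (pmean 1 π L)) := by
  obtain ⟨hπpos, hπsum⟩ := hπ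
  have hL0 := hL.1
  have hdual0 : ∀ x y : X, x ≠ y → 0 ≤ dual π L x y := fun x y hxy => by
    rw [dual_off π L hxy]
    exact div_nonneg (mul_nonneg (hπpos y).le (hL0 y x hxy.symm)) (hπpos x).le
  -- entry formulas
  have hgeoE : ∀ x y : X, x ≠ y →
      geoRev π L x y = Real.sqrt (L x y * dual π L x y) :=
    fun x y hxy => rowZero_off _ hxy
  have hCE : ∀ x y : X, x ≠ y → C1ln π L x y = lmean (L x y) (dual π L x y) :=
    fun x y hxy => rowZero_off _ hxy
  have hp13E : ∀ x y : X, x ≠ y → pmean (1/3) π L x y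
      = ((L x y ^ ((1:ℝ)/3) + dual π L x y ^ ((1:ℝ)/3))/2) ^ (3:ℝ) := by
    intro x y hxy
    rw [show pmean (1/3) π L x y
        = ((L x y ^ ((1:ℝ)/3) + dual π L x y ^ ((1:ℝ)/3))/2) ^ ((1:ℝ)/(1/3)) from
      rowZero_off _ hxy, show (1:ℝ)/(1/3) = (3:ℝ) from by norm_num]
  have hp1E : ∀ x y : X, x ≠ y → pmean 1 π L x y = (L x y + dual π L x y)/2 := by
    intro x y hxy
    rw [show pmean 1 π L x y
        = ((L x y ^ (1:ℝ) + dual π L x y ^ (1:ℝ))/2) ^ ((1:ℝ)/1) from rowZero_off _ hxy]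
    norm_num [Real.rpow_one]
  have part1 : ∀ x y : X, x ≠ y →
      geoRev π L x y ≤ C1ln π L x y ∧
      C1ln π L x y ≤ pmean (1 / 3) π L x y ∧
      pmean (1 / 3) π L x y ≤ pmean 1 π L x y := by
    intro x y hxy
    have ha := hL0 x y hxy
    have hb := hdual0 x y hxy
    rw [hgeoE x y hxy, hCE x y hxy, hp13E x y hxy, hp1E x y hxy]
    exact ⟨gm_le_lmean ha hb, lmean_le_p13 ha hb, p13_le_p1 ha hb⟩
  -- symmetry of the reversiblizations
  have hgeosym : ∀ x y : X, π x * geoRev π L x y = π y * geoRev π L y x :=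
    fun x y => symm_mean π L hπpos hL0 (fun u v => Real.sqrt (u*v))
      (fun u v => by simp [mul_comm]) (fun c u v hc _ _ => sqrt_hom hc) x y
  have hCsym : ∀ x y : X, π x * C1ln π L x y = π y * C1ln π L y x :=
    fun x y => symm_mean π L hπpos hL0 lmean
      lmean_comm (fun c u v hc hu hv => lmean_hom hc hu hv) x y
  have hp13sym : ∀ x y : X, π x * pmean (1/3) π L x y = π y * pmean (1/3) π L y x :=
    fun x y => symm_mean π L hπpos hL0 (fun u v => ((u ^ ((1:ℝ)/3) + v ^ ((1:ℝ)/3))/2) ^ ((1:ℝ)/(1/3)))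
      (fun u v => by simp [add_comm])
      (fun c u v hc hu hv => pmean_hom (by norm_num) hc hu hv) x y
  have hp1sym : ∀ x y : X, π x * pmean 1 π L x y = π y * pmean 1 π L y x :=
    fun x y => symm_mean π L hπpos hL0 (fun u v => ((u ^ (1:ℝ) + v ^ (1:ℝ))/2) ^ ((1:ℝ)/1))
      (fun u v => by simp [add_comm])
      (fun c u v hc hu hv => pmean_hom one_pos hc hu hv) x y
  -- nonnegativity of off-diagonal entries
  have hgeo0 : ∀ x y : X, x ≠ y → 0 ≤ geoRev π L x y := fun x y hxy => by
    rw [hgeoE x y hxy]; exact Real.sqrt_nonneg _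
  have hC0 : ∀ x y : X, x ≠ y → 0 ≤ C1ln π L x y := fun x y hxy => by
    rw [hCE x y hxy]; exact lmean_nonneg (hL0 x y hxy) (hdual0 x y hxy)
  have hp130 : ∀ x y : X, x ≠ y → 0 ≤ pmean (1/3) π L x y := fun x y hxy =>
    le_trans (hC0 x y hxy) (part1 x y hxy).2.1
  refine ⟨part1, ⟨?_, ?_⟩, ?_, ?_, ?_⟩
  · -- equality → reversible
    intro h
    refine ⟨hL, ?_⟩
    intro x y
    rcases eq_or_ne x y with rfl | hxy
    · rfl
    · obtain ⟨e1, e2, e3⟩ := h x y hxy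
      have hab : L x y = dual π L x y := by
        by_contra hne
        have hstrict := gm_lt_am (hL0 x y hxy) (hdual0 x y hxy) hne
        have : geoRev π L x y = pmean 1 π L x y := e1.trans (e2.trans e3)
        rw [hgeoE x y hxy, hp1E x y hxy] at this
        exact absurd this hstrict.ne
      rw [dual_off π L hxy, eq_div_iff (hπpos x).ne'] at hab
      rw [mul_comm]
      exact hab
  · -- reversible → equality
    rintro ⟨_, hrev⟩
    intro x y hxy
    have hab : dual π L x y = L x y := by
      rw [dual_off π L hxy, ← hrev x y]
      exact mul_div_cancel_left₀ _ (hπpos x).ne'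
    have ha := hL0 x y hxy
    rw [hgeoE x y hxy, hCE x y hxy, hp13E x y hxy, hp1E x y hxy, hab]
    have hsqrt : Real.sqrt (L x y * L x y) = L x y := Real.sqrt_mul_self ha
    have hlm : lmean (L x y) (L x y) = L x y := by rw [lmean, if_pos rfl]
    have hp13v : ((L x y ^ ((1:ℝ)/3) + L x y ^ ((1:ℝ)/3))/2) ^ (3:ℝ) = L x y := by
      rw [show (L x y ^ ((1:ℝ)/3) + L x y ^ ((1:ℝ)/3))/2 = L x y ^ ((1:ℝ)/3) from by ring,
        ← Real.rpow_mul ha]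
      norm_num
    have hp1v : (L x y + L x y)/2 = L x y := by ring
    rw [hsqrt, hlm, hp13v, hp1v]
    exact ⟨rfl, rfl, rfl⟩
  · exact gap_mono hcard π ⟨hπpos, hπsum⟩ _ _ hgeosym (rowZero_sum _) hgeo0
      hCsym (rowZero_sum _) (fun x y hxy => (part1 x y hxy).1)
  · exact gap_mono hcard π ⟨hπpos, hπsum⟩ _ _ hCsym (rowZero_sum _) hC0
      hp13sym (rowZero_sum _) (fun x y hxy => (part1 x y hxy).2.1)
  · exact gap_mono hcard π ⟨hπpos, hπsum⟩ _ _ hp13sym (rowZero_sum _) hp130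
      hp1sym (rowZero_sum _) (fun x y hxy => (part1 x y hxy).2.2)


end
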